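/- For any set X ⊆ O_n of real orthogonal n×n matrices, the Euclidean closure of the submonoid X* generated by X equals the Zariski closure of X*: Cl(X*) = Zcl(X*). Moreover this common set is a subgroup of O_n which is an algebraic set. -/

import Mathlib

open Matrix

/-- Evaluation of a real polynomial in the entry variables at a matrix. -/
noncomputable def evalMat {m : Type*} [Fintype m]
    (p : MvPolynomial (m × m) ℝ) (M : Matrix m m ℝ) : ℝ :=
  MvPolynomial.eval (fun q : m × m => M q.1 q.2) p

/-- A set of matrices is algebraic (over ℝ) if it is the common zero set of a set of real
polynomials in the entry variables. -/
def IsAlgebraicMat {m : Type*} [Fintype m] (A : Set (Matrix m m ℝ)) : Prop :=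
  ∃ P : Set (MvPolynomial (m × m) ℝ), A = {M | ∀ p ∈ P, evalMat p M = 0}

/-- The Zariski closure of a set of matrices: the common zero set of all real polynomials
vanishing on the set. -/
def zclMat {m : Type*} [Fintype m] (A : Set (Matrix m m ℝ)) : Set (Matrix m m ℝ) :=
  {X | ∀ p : MvPolynomial (m × m) ℝ, (∀ Y ∈ A, evalMat p Y = 0) → evalMat p X = 0}

/-- A subset of matrices is a subgroup of the orthogonal group if it consists of
orthogonal matrices, contains the identity, and is closed under products and inverses
(for orthogonal matrices, the inverse is the transpose). -/
def IsOrthSubgroup {m : Type*} [Fintype m] [DecidableEq m]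
    (A : Set (Matrix m m ℝ)) : Prop :=
  A ⊆ (Matrix.orthogonalGroup m ℝ : Set (Matrix m m ℝ)) ∧
    (1 : Matrix m m ℝ) ∈ A ∧
    (∀ X ∈ A, ∀ Y ∈ A, X * Y ∈ A) ∧
    (∀ X ∈ A, Xᵀ ∈ A)


/-!
The closure `K` of `X*` is a closed submonoid of the compact group `O_n`, hence a compact
subgroup (limits of powers supply inverses). A compact subgroup `K` of `GL_n(ℝ)` is Zariski
closed: for `x ∉ K` the compact sets `K` and `xK` are disjoint, so by Stone–Weierstrass some
polynomial `p` is close to `0` on `K` and to `1` on `xK`. Averaging `y ↦ p (y k)` over the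
Haar probability measure of `K` gives a polynomial `q` that is constant on `K`, hence on the
Zariski closure of `X*`, while `q x ≈ 1` and `q 1 ≈ 0`.
-/

open MeasureTheory MvPolynomial Set

section MatrixPolynomials

variable {m : Type*} [Fintype m]

theorem continuous_evalMat (p : MvPolynomial (m × m) ℝ) : Continuous (evalMat p) :=
  (continuous_eval p).comp (by fun_prop)

theorem subset_zclMat (A : Set (Matrix m m ℝ)) : A ⊆ zclMat A :=
  fun M hM _ hp => hp M hM

theorem zclMat_mono {A B : Set (Matrix m m ℝ)} (h : A ⊆ B) : zclMat A ⊆ zclMat B :=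
  fun _ hM p hp => hM p fun Y hY => hp Y (h hY)

theorem isClosed_zclMat (A : Set (Matrix m m ℝ)) : IsClosed (zclMat A) := by
  simp only [zclMat, ofPred_forall]
  exact isClosed_iInter fun p => isClosed_iInter fun _ =>
    isClosed_eq (continuous_evalMat p) continuous_const

theorem closure_subset_zclMat (A : Set (Matrix m m ℝ)) : closure A ⊆ zclMat A :=
  closure_minimal (subset_zclMat A) (isClosed_zclMat A)

theorem isAlgebraicMat_zclMat (A : Set (Matrix m m ℝ)) : IsAlgebraicMat (zclMat A) :=
  ⟨{p | ∀ Y ∈ A, evalMat p Y = 0}, rfl⟩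

noncomputable def evalMatContinuousAlgHom :
    MvPolynomial (m × m) ℝ →ₐ[ℝ] C(Matrix m m ℝ, ℝ) :=
  aeval fun ij => ⟨fun M => M ij.1 ij.2, by fun_prop⟩

theorem evalMatContinuousAlgHom_apply (p : MvPolynomial (m × m) ℝ) (M : Matrix m m ℝ) :
    evalMatContinuousAlgHom p M = evalMat p M := by
  induction p using MvPolynomial.induction_on with
  | C a => simp [evalMatContinuousAlgHom, evalMat]
  | add p q hp hq => simp_all [evalMat]
  | mul_X p ij hp => simp_all [evalMatContinuousAlgHom, evalMat]

theorem separatesPoints_range_evalMatContinuousAlgHom :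
    (evalMatContinuousAlgHom (m := m)).range.SeparatesPoints := by
  intro M N hMN
  obtain ⟨i, j, hij⟩ : ∃ i j, M i j ≠ N i j := by
    by_contra! h
    exact hMN (Matrix.ext h)
  refine ⟨_, ⟨_, ⟨X (i, j), rfl⟩, rfl⟩, ?_⟩
  simpa [evalMatContinuousAlgHom_apply, evalMat] using hij

theorem exists_evalMat_near_zero_one {A B : Set (Matrix m m ℝ)} (hA : IsCompact A)
    (hB : IsCompact B) (hAB : Disjoint A B) {ε : ℝ} (hε : 0 < ε) :
    ∃ p : MvPolynomial (m × m) ℝ,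
      (∀ M ∈ A, |evalMat p M| < ε) ∧ ∀ M ∈ B, |evalMat p M - 1| < ε := by
  have : LocallyCompactSpace (Matrix m m ℝ) :=
    inferInstanceAs (LocallyCompactSpace (m → m → ℝ))
  obtain ⟨f, hfA, hfB, -⟩ := exists_continuous_zero_one_of_isCompact hA hB.isClosed hAB
  obtain ⟨_, ⟨p, rfl⟩, hp⟩ :=
    ContinuousMap.exists_mem_subalgebra_near_continuous_of_isCompact_of_separatesPoints
      separatesPoints_range_evalMatContinuousAlgHom f (hA.union hB) hε
  refine ⟨p, fun M hM => ?_, fun M hM => ?_⟩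
  · simpa [evalMatContinuousAlgHom_apply, hfA hM] using hp M (Or.inl hM)
  · simpa [evalMatContinuousAlgHom_apply, hfB hM] using hp M (Or.inr hM)

end MatrixPolynomials

section Averaging

variable {T : Type*} [MeasurableSpace T]

theorem exists_eval_eq_integral_eval_map {σ τ : Type*} (μ : Measure T)
    (P : MvPolynomial σ (MvPolynomial τ ℝ)) (F : T → τ → ℝ)
    (hF : ∀ c : MvPolynomial τ ℝ, Integrable (fun t => eval (F t) c) μ) :
    ∃ q : MvPolynomial σ ℝ, ∀ y : σ → ℝ,
      eval y q = ∫ t, eval y (map (eval (F t)) P) ∂μ := by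
  refine ⟨∑ d ∈ P.support, monomial d (∫ t, eval (F t) (P.coeff d) ∂μ), fun y => ?_⟩
  simp_rw [eval_map, eval₂_eq]
  rw [integral_finsetSum _ fun d _ => (hF _).mul_const _]
  simp [eval_monomial, integral_mul_const, Finsupp.prod]

variable {m : Type*} [Fintype m]

theorem exists_evalMat_mul_eq_eval_map (p : MvPolynomial (m × m) ℝ) :
    ∃ P : MvPolynomial (m × m) (MvPolynomial (m × m) ℝ), ∀ y g : Matrix m m ℝ,
      evalMat p (y * g) = eval (Function.uncurry y) (map (eval (Function.uncurry g)) P) := by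
  refine ⟨aeval (fun ij => ∑ k, X (ij.1, k) * C (X (k, ij.2))) p, fun y g => ?_⟩
  induction p using MvPolynomial.induction_on with
  | C a => simp [evalMat]
  | add p q hp hq => simp_all [evalMat]
  | mul_X p ij hp => simp_all [evalMat, Matrix.mul_apply, Function.uncurry]

theorem exists_evalMat_eq_integral_mul [TopologicalSpace T] [CompactSpace T]
    [OpensMeasurableSpace T] (μ : Measure T) [IsFiniteMeasure μ] {F : T → Matrix m m ℝ}
    (hF : Continuous F) (p : MvPolynomial (m × m) ℝ) :
    ∃ q : MvPolynomial (m × m) ℝ, ∀ y, evalMat q y = ∫ t, evalMat p (y * F t) ∂μ := by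
  obtain ⟨P, hP⟩ := exists_evalMat_mul_eq_eval_map p
  obtain ⟨q, hq⟩ := exists_eval_eq_integral_eval_map μ P (fun t => Function.uncurry (F t))
    fun c => ((continuous_eval c).comp (by fun_prop)).integrable_of_hasCompactSupport
      (HasCompactSupport.of_compactSpace _)
  exact ⟨q, fun y => by simp_rw [hP]; exact hq _⟩

theorem abs_integral_sub_le_of_forall_abs_sub_le (μ : Measure T) [IsProbabilityMeasure μ]
    {f : T → ℝ} (hf : Integrable f μ) {c ε : ℝ} (h : ∀ t, |f t - c| ≤ ε) :
    |∫ t, f t ∂μ - c| ≤ ε := by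
  have := norm_integral_le_of_norm_le_const (μ := μ) (f := fun t => f t - c)
    (Filter.Eventually.of_forall h)
  simpa [integral_sub hf (integrable_const c)] using this

end Averaging

section Groups

theorem Matrix.isCompact_unitaryGroup {m 𝕜 : Type*} [Fintype m] [DecidableEq m] [RCLike 𝕜] :
    IsCompact (Matrix.unitaryGroup m 𝕜 : Set (Matrix m m 𝕜)) :=
  (isCompact_univ_pi fun _ => isCompact_univ_pi fun _ => isCompact_closedBall (0 : 𝕜) 1)
    |>.of_isClosed_subset (isClosed_unitary (R := Matrix m m 𝕜)) fun _ hU i _ j _ => by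
      simpa using entry_norm_bound_of_unitary hU i j

instance Matrix.compactSpace_unitaryGroup {m 𝕜 : Type*} [Fintype m] [DecidableEq m]
    [RCLike 𝕜] : CompactSpace (Matrix.unitaryGroup m 𝕜) :=
  isCompact_iff_compactSpace.mp Matrix.isCompact_unitaryGroup

theorem closure_submonoidClosure_eq_image_closure_subgroupClosure {R : Type*} [Monoid R]
    [StarMul R] [TopologicalSpace R] [T1Space R] [ContinuousMul R] [ContinuousStar R]
    [CompactSpace (unitary R)] {X : Set R} (hX : X ⊆ unitary R) :
    closure (Submonoid.closure X : Set R) =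
      Subtype.val ''
        closure (Subgroup.closure (Subtype.val ⁻¹' X : Set (unitary R)) : Set (unitary R)) := by
  have hS : (Submonoid.closure X : Set R) =
      Subtype.val ''
        (Submonoid.closure (Subtype.val ⁻¹' X : Set (unitary R)) : Set (unitary R)) := by
    rw [← Submonoid.coe_subtype, ← Submonoid.coe_map, MonoidHom.map_mclosure,
      Submonoid.coe_subtype, image_preimage_eq_of_subset (by rwa [Subtype.range_coe])]
  rw [hS, isClosed_unitary.isClosedEmbedding_subtypeVal.closure_image_eq,
    closure_submonoidClosure_eq_closure_subgroupClosure (Subtype.val ⁻¹' X : Set (unitary R))]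
  rfl

theorem disjoint_range_image_mul_range {G M : Type*} [Group G] [Monoid M] {ρ : G →* M} {x : M}
    (hx : x ∉ range ρ) : Disjoint (range ρ) ((x * ·) '' range ρ) := by
  rw [disjoint_right]
  rintro _ ⟨_, ⟨g, rfl⟩, rfl⟩ ⟨h, hh⟩
  refine hx ⟨h * g⁻¹, ?_⟩
  rw [map_mul, hh, mul_assoc, ← map_mul, mul_inv_cancel, map_one, mul_one]

variable {m : Type*} [Fintype m] [DecidableEq m]

theorem isOrthSubgroup_range {G : Type*} [Group G] (ρ : G →* Matrix m m ℝ)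
    (hρ : ∀ g, ρ g ∈ Matrix.orthogonalGroup m ℝ) : IsOrthSubgroup (range ρ) := by
  refine ⟨range_subset_iff.mpr hρ, ⟨1, map_one ρ⟩, ?_, ?_⟩
  · rintro _ ⟨g, rfl⟩ _ ⟨h, rfl⟩
    exact ⟨g * h, map_mul ρ g h⟩
  · rintro _ ⟨g, rfl⟩
    have hgg : (ρ g)ᵀ * ρ g = 1 := (Matrix.mem_orthogonalGroup_iff' m ℝ).mp (hρ g)
    refine ⟨g⁻¹, ?_⟩
    calc ρ g⁻¹ = (ρ g)ᵀ * (ρ g * ρ g⁻¹) := by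
          rw [← Matrix.mul_assoc, hgg, Matrix.one_mul]
      _ = (ρ g)ᵀ := by rw [← map_mul, mul_inv_cancel, map_one, Matrix.mul_one]

theorem zclMat_range_subset {G : Type*} [Group G] [TopologicalSpace G] [IsTopologicalGroup G]
    [CompactSpace G] {ρ : G →* Matrix m m ℝ} (hρ : Continuous ρ) :
    zclMat (range ρ) ⊆ range ρ := by
  intro x hx
  by_contra hxK
  have hK : IsCompact (range ρ) := isCompact_range hρ
  obtain ⟨p, hpK, hpxK⟩ := exists_evalMat_near_zero_one hK
    (hK.image (continuous_const_mul x)) (disjoint_range_image_mul_range hxK)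
    (by norm_num : (0 : ℝ) < 1 / 4)
  let : MeasurableSpace G := borel G
  have : BorelSpace G := ⟨rfl⟩
  let μ := Measure.haarMeasure (⊤ : TopologicalSpace.PositiveCompacts G)
  have : IsProbabilityMeasure μ :=
    ⟨by rw [← TopologicalSpace.PositiveCompacts.coe_top]; exact Measure.haarMeasure_self⟩
  obtain ⟨q, hq⟩ := exists_evalMat_eq_integral_mul μ hρ p
  have hint : ∀ y, Integrable (fun t => evalMat p (y * ρ t)) μ := fun y =>
    ((continuous_evalMat p).comp (continuous_const.mul hρ)).integrable_of_hasCompactSupport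
      (HasCompactSupport.of_compactSpace _)
  have hq_const : ∀ g, evalMat q (ρ g) = evalMat q 1 := fun g => by
    simp_rw [hq, one_mul, ← map_mul]
    exact integral_mul_left_eq_self (fun t => evalMat p (ρ t)) g
  have hqx : evalMat q x = evalMat q 1 := by
    have := hx (q - C (evalMat q 1)) fun _ ⟨g, hg⟩ => by
      simp only [← hg, evalMat, map_sub, eval_C]
      exact sub_eq_zero.mpr (hq_const g)
    simpa [evalMat, sub_eq_zero] using this
  have hq1_le : |evalMat q 1| ≤ 1 / 4 := by
    simpa [hq] using abs_integral_sub_le_of_forall_abs_sub_le μ (hint 1) (c := 0) fun t => by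
      simpa using (hpK _ ⟨t, rfl⟩).le
  have hqx_le : |evalMat q x - 1| ≤ 1 / 4 := by
    rw [hq]
    exact abs_integral_sub_le_of_forall_abs_sub_le μ (hint x) fun t =>
      (hpxK _ ⟨ρ t, ⟨t, rfl⟩, rfl⟩).le
  rw [hqx] at hqx_le
  linarith [abs_le.mp hq1_le, abs_le.mp hqx_le]

end Groups

/-- For a set `X` of real orthogonal `n × n` matrices, the Euclidean
closure of the submonoid `X*` generated by `X` equals its Zariski closure; moreover this
common set is a subgroup of `O_n` which is an algebraic set. -/
theorem closure_submonoid_eq_zariski {n : ℕ}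
    (X : Set (Matrix (Fin n) (Fin n) ℝ))
    (hX : X ⊆ (Matrix.orthogonalGroup (Fin n) ℝ : Set (Matrix (Fin n) (Fin n) ℝ))) :
    closure (Submonoid.closure X : Set (Matrix (Fin n) (Fin n) ℝ)) =
      zclMat (Submonoid.closure X : Set (Matrix (Fin n) (Fin n) ℝ)) ∧
    IsOrthSubgroup (closure (Submonoid.closure X : Set (Matrix (Fin n) (Fin n) ℝ))) ∧
    IsAlgebraicMat (closure (Submonoid.closure X : Set (Matrix (Fin n) (Fin n) ℝ))) := by
  set S := (Submonoid.closure X : Set (Matrix (Fin n) (Fin n) ℝ))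
  let H := (Subgroup.closure
    (Subtype.val ⁻¹' X : Set (Matrix.orthogonalGroup (Fin n) ℝ))).topologicalClosure
  have : CompactSpace H :=
    isCompact_iff_compactSpace.mp (Subgroup.isClosed_topologicalClosure _).isCompact
  let ρ := (Matrix.orthogonalGroup (Fin n) ℝ).subtype.comp H.subtype
  have hS : closure S = range ρ := by
    rw [closure_submonoidClosure_eq_image_closure_subgroupClosure hX]
    ext M
    simp [ρ, H, ← Subgroup.topologicalClosure_coe]
  have hzcl : zclMat S ⊆ closure S :=
    calc zclMat S ⊆ zclMat (closure S) := zclMat_mono subset_closure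
      _ = zclMat (range ρ) := by rw [hS]
      _ ⊆ range ρ := zclMat_range_subset (continuous_subtype_val.comp continuous_subtype_val)
      _ = closure S := hS.symm
  have heq : closure S = zclMat S := (closure_subset_zclMat S).antisymm hzcl
  refine ⟨heq, hS ▸ isOrthSubgroup_range ρ fun h => (h : Matrix.orthogonalGroup (Fin n) ℝ).2,
    heq ▸ isAlgebraicMat_zclMat S⟩
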